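/- For a nice function f : ℝⁿ → ℤ (right continuous, with finitely supported differential Δf and support bounded below), the function is recovered from its differential by summation: f(x) = Σ_{y ≤ x} Δf(y) for all x ∈ ℝⁿ. -/

import Mathlib

open scoped ENNReal NNReal
open Filter
noncomputable section
attribute [local instance] Classical.propDecidable
set_option linter.unusedVariables false

/-- Points of the poset ℝⁿ. The product instance gives the pointwise partial order
and the sup-norm metric. -/
abbrev Pt (n : ℕ) := Fin n → ℝ

/-- The diagonal vector δ⃗ = (δ,...,δ). -/
def diag (n : ℕ) (δ : ℝ) : Pt n := fun _ => δ

lemma le_add_diag {n : ℕ} (x : Pt n) {δ : ℝ} (hδ : 0 ≤ δ) : x ≤ x + diag n δ :=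
  fun _ => le_add_of_nonneg_right hδ

/-- A (p.f.d.-agnostic) persistence module over the poset ℝⁿ with values in
k-vector spaces: a functor from ℝⁿ to Vec. -/
structure PersMod (n : ℕ) (k : Type*) [Field k] where
  V : Pt n → Type*
  [addgrp : ∀ x, AddCommGroup (V x)]
  [mod : ∀ x, Module k (V x)]
  ρ : ∀ {x y : Pt n}, x ≤ y → (V x →ₗ[k] V y)
  ρ_id : ∀ x : Pt n, ρ (le_refl x) = LinearMap.id
  ρ_comp : ∀ {x y z : Pt n} (h1 : x ≤ y) (h2 : y ≤ z), ρ (h1.trans h2) = (ρ h2).comp (ρ h1)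

attribute [instance] PersMod.addgrp PersMod.mod

variable {n : ℕ} {k : Type*} [Field k]

/-- A morphism (natural transformation) of persistence modules. -/
structure PersHom (M N : PersMod n k) where
  app : ∀ x, M.V x →ₗ[k] N.V x
  natural : ∀ {x y : Pt n} (h : x ≤ y), (app y).comp (M.ρ h) = (N.ρ h).comp (app x)

/-- A δ-interleaving between M and N: families φ_x : M_x → N_{x+δ⃗},
ψ_x : N_x → M_{x+δ⃗} satisfying square and triangular commutativity. -/
def PersMod.Interleaved (M N : PersMod n k) (δ : ℝ≥0) : Prop :=
  ∃ (φ : ∀ x : Pt n, M.V x →ₗ[k] N.V (x + diag n (δ : ℝ)))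
    (ψ : ∀ x : Pt n, N.V x →ₗ[k] M.V (x + diag n (δ : ℝ))),
    (∀ {x y : Pt n} (h : x ≤ y),
        (φ y).comp (M.ρ h) = (N.ρ (add_le_add_left h _)).comp (φ x)) ∧
    (∀ {x y : Pt n} (h : x ≤ y),
        (ψ y).comp (N.ρ h) = (M.ρ (add_le_add_left h _)).comp (ψ x)) ∧
    (∀ x : Pt n, M.ρ ((le_add_diag x δ.coe_nonneg).trans (le_add_diag _ δ.coe_nonneg))
        = (ψ (x + diag n (δ : ℝ))).comp (φ x)) ∧
    (∀ x : Pt n, N.ρ ((le_add_diag x δ.coe_nonneg).trans (le_add_diag _ δ.coe_nonneg))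
        = (φ (x + diag n (δ : ℝ))).comp (ψ x))

/-- The interleaving distance (∞ if no interleaving exists). -/
def PersMod.dI (M N : PersMod n k) : ℝ≥0∞ :=
  ⨅ (δ : ℝ≥0) (_ : M.Interleaved N δ), (δ : ℝ≥0∞)

/-- The diagonal shift M_{→d}. -/
def PersMod.dshift (M : PersMod n k) (d : ℝ) : PersMod n k where
  V x := M.V (x + diag n d)
  ρ h := M.ρ (add_le_add_left h _)
  ρ_id x := M.ρ_id _
  ρ_comp h1 h2 := M.ρ_comp _ _

/-- M is c-trivial: every structure map over a diagonal shift by c is zero. -/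
def PersMod.DTrivial (M : PersMod n k) (c : ℝ≥0) : Prop :=
  ∀ x : Pt n, M.ρ (le_add_diag x c.coe_nonneg) = 0

/-- The 1-parameter slice of M along the diagonal line through x. -/
def PersMod.slice (M : PersMod n k) (x : Pt n) : PersMod 1 k where
  V t := M.V (x + diag n (t 0))
  ρ {t t'} h := M.ρ (fun i => add_le_add_right (h 0) (x i))
  ρ_id t := M.ρ_id _
  ρ_comp h1 h2 := M.ρ_comp _ _

/-- δ* = sup over diagonal lines of the slice interleaving distances. -/
def deltaStar (M N : PersMod n k) : ℝ≥0∞ :=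
  ⨆ x : Pt n, (M.slice x).dI (N.slice x)

/-- Finite direct sum of persistence modules. -/
def dirSum {ι : Type} [Fintype ι] (Ms : ι → PersMod n k) : PersMod n k where
  V x := ∀ i, (Ms i).V x
  ρ h := LinearMap.pi (fun i => ((Ms i).ρ h).comp (LinearMap.proj i))
  ρ_id x := by
    apply LinearMap.ext; intro v; funext i
    simp [(Ms i).ρ_id]
  ρ_comp h1 h2 := by
    apply LinearMap.ext; intro v; funext i
    show ((Ms i).ρ (h1.trans h2)) (v i) = _
    rw [(Ms i).ρ_comp h1 h2]; rfl

/-- Zigzag reachability inside a set: p ≤ p₁ ≥ p₂ ≤ ... with all points in A. -/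
def Zigzag (A : Set (Pt n)) : Pt n → Pt n → Prop :=
  Relation.ReflTransGen (fun a b => a ∈ A ∧ b ∈ A ∧ (a ≤ b ∨ b ≤ a))

/-- An interval: nonempty, order-convex, zigzag-connected. -/
def IsPInterval (I : Set (Pt n)) : Prop :=
  I.Nonempty ∧ (∀ p ∈ I, ∀ q ∈ I, ∀ r, p ≤ r → r ≤ q → r ∈ I) ∧
    ∀ p ∈ I, ∀ q ∈ I, Zigzag I p q

/-- Q is a (zigzag-)connected component of A. -/
def IsComponent (A Q : Set (Pt n)) : Prop :=
  ∃ p ∈ A, Q = {q | Zigzag A p q}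

/-- The fibre of the interval module with interval I: k on I, 0 elsewhere,
realised as a submodule of k. -/
def subOf (k : Type*) [Field k] (I : Set (Pt n)) (x : Pt n) : Submodule k k :=
  if x ∈ I then ⊤ else ⊥

/-- The canonical map between fibres: identity within I, zero otherwise. -/
def stepFun (I : Set (Pt n)) (x y : Pt n) :
    ↥(subOf k I x) →ₗ[k] ↥(subOf k I y) where
  toFun v := ⟨if y ∈ I then (v : k) else 0, by
    by_cases hy : y ∈ I
    · rw [if_pos hy]; unfold subOf; rw [if_pos hy]; exact Submodule.mem_top
    · rw [if_neg hy]; exact Submodule.zero_mem _⟩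
  map_add' a b := by
    by_cases hy : y ∈ I <;> · apply Subtype.ext; simp [hy]
  map_smul' c a := by
    by_cases hy : y ∈ I <;> · apply Subtype.ext; simp [hy]

/-- The interval module with interval I. -/
def IntervalMod (k : Type*) [Field k] (I : Set (Pt n)) (hI : IsPInterval I) :
    PersMod n k where
  V x := ↥(subOf k I x)
  ρ {x y} _ := stepFun I x y
  ρ_id x := by
    apply LinearMap.ext; intro v
    apply Subtype.ext
    by_cases hx : x ∈ I
    · simp [stepFun, hx]
    · have hv : (v : k) = 0 := by
          have hw : ∀ w : k, w ∈ subOf k I x → w = 0 := fun w hw => by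
            unfold subOf at hw; rw [if_neg hx] at hw; exact (Submodule.mem_bot k).mp hw
          exact hw _ v.2
      simp [stepFun, hx, hv]
  ρ_comp {x y z} h1 h2 := by
    apply LinearMap.ext; intro v
    apply Subtype.ext
    by_cases hz : z ∈ I
    · by_cases hy : y ∈ I
      · simp [stepFun, hy, hz]
      · have hx : x ∉ I := fun hx => hy (hI.2.1 x hx z hz y h1 h2)
        have hv : (v : k) = 0 := by
          have hw : ∀ w : k, w ∈ subOf k I x → w = 0 := fun w hw => by
            unfold subOf at hw; rw [if_neg hx] at hw; exact (Submodule.mem_bot k).mp hw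
          exact hw _ v.2
        simp [stepFun, hy, hz, hv]
    · simp [stepFun, hz]

/-- Lower boundary L(I). -/
def lowerBd (I : Set (Pt n)) : Set (Pt n) :=
  {x | x ∈ closure I ∧ ∀ y : Pt n, (∀ i, y i < x i) → y ∉ I}

/-- Upper boundary U(I). -/
def upperBd (I : Set (Pt n)) : Set (Pt n) :=
  {x | x ∈ closure I ∧ ∀ y : Pt n, (∀ i, x i < y i) → y ∉ I}

/-- Diagonal distance dl(x, A): the infimum of sup-norm distances from x to
points of A along the diagonal line Δ_x, ∞ when Δ_x ∩ A = ∅. -/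
def dl (x : Pt n) (A : Set (Pt n)) : ℝ≥0∞ :=
  ⨅ (α : ℝ) (_ : x + diag n α ∈ A), ENNReal.ofReal |α|

/-- d_triv^{(M,N)}(x) = max(dl(x,U(I_M))/2, dl(x,L(I_N))/2). -/
def dtriv (IM IN : Set (Pt n)) (x : Pt n) : ℝ≥0∞ :=
  max (dl x (upperBd IM) / 2) (dl x (lowerBd IN) / 2)

/-- An intersection component with interval Q is δ_{(M,N)}-trivializable. -/
def Trivializable (IM IN Q : Set (Pt n)) (δ : ℝ≥0∞) : Prop :=
  ∀ x ∈ Q, dtriv IM IN x < δ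

/-- (M,N)-validity of an intersection component with interval Q. -/
def MNValid (IM IN Q : Set (Pt n)) : Prop :=
  ∀ x ∈ Q, (∀ y : Pt n, y ≤ x → y ∈ IM → y ∈ IN) ∧
    (∀ z : Pt n, x ≤ z → z ∈ IN → z ∈ IM)

/-- The interval of the shifted module N_{→d}. -/
def shiftSet (I : Set (Pt n)) (d : ℝ) : Set (Pt n) := {x | x + diag n d ∈ I}

/-- A vertex of (the boundary of) a set: a boundary point through which no
nontrivial line segment of the boundary passes. -/
def IsVertex (I : Set (Pt n)) (x : Pt n) : Prop :=
  x ∈ frontier I ∧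
    ¬ ∃ v : Pt n, v ≠ 0 ∧ ∃ ε > (0:ℝ), ∀ t : ℝ, |t| < ε → x + t • v ∈ frontier I

/-- An axis-aligned (possibly degenerate) rectangle. -/
def IsRect (R : Set (Pt n)) : Prop := ∃ a b : Pt n, a ≤ b ∧ R = Set.Icc a b

/-- A discretely presented interval: a finite union of rectangles. -/
def DiscPresented (I : Set (Pt n)) : Prop :=
  ∃ F : Finset (Set (Pt n)), (∀ R ∈ F, IsRect R) ∧ I = ⋃ R ∈ F, (R : Set (Pt n))

/-- f is a facet of I orthogonal to direction i: contained in a hyperplane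
{y_i = c}, contained in the lower or upper boundary, and (n−1)-dimensional
(contains a full hyperplane patch around one of its points). -/
def IsFacetDir (I : Set (Pt n)) (f : Set (Pt n)) (i : Fin n) : Prop :=
  ∃ c : ℝ, f ⊆ {y | y i = c} ∧ (f ⊆ lowerBd I ∨ f ⊆ upperBd I) ∧
    ∃ z ∈ f, ∃ ε > (0:ℝ), ∀ y : Pt n, y i = c → dist y z < ε → y ∈ f

/-- The set D(x) of the four diagonal boundary distances. -/
def candD (IM IN : Set (Pt n)) (x : Pt n) : Set ℝ≥0∞ :=
  {dl x (lowerBd IM), dl x (lowerBd IN), dl x (upperBd IM), dl x (upperBd IN)}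

/-- The candidate set S. -/
def candS (IM IN : Set (Pt n)) : Set ℝ≥0∞ :=
  {d | ∃ x : Pt n, (IsVertex IM x ∨ IsVertex IN x) ∧
    (d ∈ candD IM IN x ∨ 2 * d ∈ candD IM IN x)}

/-- One-sided limit lim_{ε→0+} f(x − ε v) (junk value if the limit fails to exist). -/
def dlim (f : Pt n → ℤ) (x v : Pt n) : ℤ :=
  limUnder (nhdsWithin (0:ℝ) (Set.Ioi 0)) (fun ε : ℝ => f (x - ε • v))

/-- The indicator vector Σ_{i ∈ s} e_i. -/
def basisVec (n : ℕ) (s : Finset (Fin n)) : Pt n := fun i => if i ∈ s then 1 else 0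

/-- The differential Δf(x) = Σ_k (−1)^k Σ_{|s|=k} lim_{ε→0+} f(x − ε Σ_{i∈s} e_i). -/
def diffl (f : Pt n → ℤ) (x : Pt n) : ℤ :=
  ∑ s : Finset (Fin n), (-1 : ℤ) ^ s.card * dlim f x (basisVec n s)

/-- Right continuity of f : ℝⁿ → ℤ. -/
def RightCont (f : Pt n → ℤ) : Prop :=
  ∀ x : Pt n, Filter.Tendsto f (nhdsWithin x (Set.Ici x)) (nhds (f x))

/-- A nice function: right continuous, finitely supported differential,
support bounded below. -/
def NiceFn (f : Pt n → ℤ) : Prop :=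
  RightCont f ∧ {x | diffl f x ≠ 0}.Finite ∧ ∃ a : ℝ, ∀ x, f x ≠ 0 → ∀ i, a ≤ x i

/-- Positive part Δf₊. -/
def difflp (f : Pt n → ℤ) (x : Pt n) : ℤ := max (diffl f x) 0
/-- Negative part Δf₋. -/
def difflm (f : Pt n → ℤ) (x : Pt n) : ℤ := min (diffl f x) 0

/-- Σ_{y ≤ x} g(y), as a finite sum over the support. -/
def sumLe (g : Pt n → ℤ) (x : Pt n) : ℤ := ∑ᶠ y ∈ {y : Pt n | y ≤ x}, g y

/-- The δ-extension f^{+δ}(x) = f_{Σ+}(x+δ⃗) + f_{Σ−}(x−δ⃗). -/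
def extend (f : Pt n → ℤ) (δ : ℝ) (x : Pt n) : ℤ :=
  sumLe (difflp f) (x + diag n δ) + sumLe (difflm f) (x - diag n δ)

/-- The δ-shrinking f^{−δ}(x) = f_{Σ−}(x+δ⃗) + f_{Σ+}(x−δ⃗). -/
def shrink (f : Pt n → ℤ) (δ : ℝ) (x : Pt n) : ℤ :=
  sumLe (difflm f) (x + diag n δ) + sumLe (difflp f) (x - diag n δ)

/-- d₊(f,g) = inf{δ : f ≤ g^{+δ}, g ≤ f^{+δ}}. -/
def dplus (f g : Pt n → ℤ) : ℝ≥0∞ :=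
  ⨅ (δ : ℝ≥0) (_ : (∀ x, f x ≤ extend g δ x) ∧ (∀ x, g x ≤ extend f δ x)), (δ : ℝ≥0∞)

/-- d₋(f,g) = inf{δ : f ≥ g^{−δ}, g ≥ f^{−δ}}. -/
def dminus (f g : Pt n → ℤ) : ℝ≥0∞ :=
  ⨅ (δ : ℝ≥0) (_ : (∀ x, shrink g δ x ≤ f x) ∧ (∀ x, shrink f δ x ≤ g x)), (δ : ℝ≥0∞)

/-- The dimension distance d₀ = min(d₋, d₊). -/
def d0 (f g : Pt n → ℤ) : ℝ≥0∞ := min (dminus f g) (dplus f g)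

/-- The dimension function dm M(x) = dim M_x (as an integer). -/
def dmFun (M : PersMod n k) : Pt n → ℤ := fun x => (Module.finrank k (M.V x) : ℤ)

/-- A nice persistence module: all structure maps over sufficiently small
diagonal shifts are injective or surjective. -/
def PersMod.Nice (M : PersMod n k) : Prop :=
  ∃ ε₀ > (0:ℝ), ∀ ε : ℝ, ∀ h0 : 0 < ε, ε < ε₀ → ∀ x : Pt n,
    Function.Injective (M.ρ (le_add_diag x h0.le)) ∨
      Function.Surjective (M.ρ (le_add_diag x h0.le))

/-- Composition ρ_i ∘ ... ∘ ρ₁ of a chain of linear maps. -/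
def chainComp {K : Type*} [Field K] (V : ℕ → Type*) [∀ i, AddCommGroup (V i)]
    [∀ i, Module K (V i)] (ρ : ∀ i, V i →ₗ[K] V (i+1)) : ∀ i, V 0 →ₗ[K] V i
  | 0 => LinearMap.id
  | (i+1) => (ρ i).comp (chainComp V ρ i)

/-!
Put `g := Σ_{y ≤ ·} Δf(y)`. The limit of `g` at `x - ε·e_s`, `ε → 0⁺`, sums `Δf(y)` over the
corners `y ≤ x` with `y_i < x_i` for `i ∈ s`, so inclusion–exclusion over `s` leaves only the
corner `y = x` and gives `Δg = Δf`; moreover `g`, like `f`, is right continuous with support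
bounded below. If `f ≠ g`, the support of `φ = f - g` is nonempty and bounded below, and right
continuity at the infimum of a decreasing chain in it puts that infimum in it, so Zorn's lemma
yields a minimal point `q`. As `f = g` strictly below `q`, every term of `Δf(q) - Δg(q)` except
the one for `s = ∅` cancels, whence `0 = Δf(q) - Δg(q) = φ(q) ≠ 0`.
-/

open Topology

lemma sub_smul_basisVec_apply (x : Pt n) (ε : ℝ) (s : Finset (Fin n)) (i : Fin n) :
    (x - ε • basisVec n s) i = x i - if i ∈ s then ε else 0 := by
  by_cases h : i ∈ s <;> simp [basisVec, h]

lemma sub_smul_basisVec_lt (x : Pt n) {ε : ℝ} (hε : 0 < ε) {s : Finset (Fin n)}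
    (hs : s.Nonempty) : x - ε • basisVec n s < x := by
  obtain ⟨j, hj⟩ := hs
  refine Pi.lt_def.2 ⟨fun i => ?_, j, ?_⟩
  · rw [sub_smul_basisVec_apply]
    split_ifs <;> linarith
  · rw [sub_smul_basisVec_apply, if_pos hj]
    linarith

-- Arbitrary `Decidable` instances, so that the lemma rewrites whichever ones the goal carries.
lemma Finset.sum_ite_forall_mem_neg_one_pow_card {ι : Type*} [Fintype ι] (p : ι → Prop)
    [∀ s : Finset ι, Decidable (∀ i ∈ s, p i)] [Decidable (∀ i, ¬ p i)] :
    ∑ s : Finset ι, (if ∀ i ∈ s, p i then (-1 : ℤ) ^ s.card else 0) =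
      if ∀ i, ¬ p i then 1 else 0 := by
  have hfilter : ({s | ∀ i ∈ s, p i} : Finset (Finset ι)) = (Finset.univ.filter p).powerset := by
    ext s; simp [Finset.subset_iff]
  rw [← Finset.sum_filter, hfilter, Finset.sum_powerset_neg_one_pow_card]
  simp [Finset.filter_eq_empty_iff]

lemma eventually_le_sub_iff (a b : ℝ) : ∀ᶠ ε in 𝓝[>] (0 : ℝ), (b ≤ a - ε ↔ b < a) := by
  by_cases hba : b < a
  · filter_upwards [Ioo_mem_nhdsGT (sub_pos.2 hba)] with ε hε
    exact iff_of_true (by linarith [hε.2]) hba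
  · filter_upwards [self_mem_nhdsWithin] with ε (hε : 0 < ε)
    exact iff_of_false (by linarith [not_lt.1 hba]) hba

lemma eventually_le_sub_smul_basisVec_iff (x y : Pt n) (s : Finset (Fin n)) :
    ∀ᶠ ε in 𝓝[>] (0 : ℝ), (y ≤ x - ε • basisVec n s ↔ y ≤ x ∧ ∀ i ∈ s, y i < x i) := by
  have hcoord : ∀ i, ∀ᶠ ε in 𝓝[>] (0 : ℝ),
      (y i ≤ (x - ε • basisVec n s) i ↔ y i ≤ x i ∧ (i ∈ s → y i < x i)) := by
    intro i
    by_cases hi : i ∈ s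
    · filter_upwards [eventually_le_sub_iff (x i) (y i)] with ε hε
      rw [sub_smul_basisVec_apply, if_pos hi, hε]
      exact ⟨fun h => ⟨h.le, fun _ => h⟩, fun h => h.2 hi⟩
    · exact .of_forall fun ε => by simp [sub_smul_basisVec_apply x ε s i, hi]
  filter_upwards [eventually_all.2 hcoord] with ε hε
  simp only [Pi.le_def, hε]
  exact ⟨fun h => ⟨fun i => (h i).1, fun i hi => (h i).2 hi⟩,
    fun h i => ⟨h.1 i, h.2 i⟩⟩

section Dlim

variable {f g : Pt n → ℤ}

lemma dlim_eq_of_eventually_eq {x v : Pt n} {c : ℤ}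
    (h : ∀ᶠ ε in 𝓝[>] (0 : ℝ), f (x - ε • v) = c) : dlim f x v = c :=
  (tendsto_nhds_of_eventually_eq h).limUnder_eq

lemma dlim_basisVec_empty (f : Pt n → ℤ) (x : Pt n) : dlim f x (basisVec n ∅) = f x :=
  dlim_eq_of_eventually_eq <| .of_forall fun ε => by
    congr 1; ext i; simp [basisVec]

lemma dlim_congr_of_eq_of_lt {x : Pt n} (h : ∀ y < x, f y = g y) {s : Finset (Fin n)}
    (hs : s.Nonempty) : dlim f x (basisVec n s) = dlim g x (basisVec n s) := by
  have hfg : (fun ε : ℝ => f (x - ε • basisVec n s)) =ᶠ[𝓝[>] (0 : ℝ)]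
      fun ε => g (x - ε • basisVec n s) := by
    filter_upwards [self_mem_nhdsWithin] with ε hε
    exact h _ (sub_smul_basisVec_lt x hε hs)
  rw [dlim, dlim, limUnder, limUnder, Filter.map_congr hfg]

lemma diffl_sub_diffl_of_eq_of_lt {x : Pt n} (h : ∀ y < x, f y = g y) :
    diffl f x - diffl g x = f x - g x := by
  rw [diffl, diffl, ← Finset.sum_sub_distrib, Finset.sum_eq_single ∅]
  · simp [dlim_basisVec_empty]
  · intro s _ hs
    rw [dlim_congr_of_eq_of_lt h (Finset.nonempty_iff_ne_empty.2 hs), sub_self]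
  · simp

lemma diffl_eq_zero_of_apply_lt {a : ℝ} (ha : ∀ z, f z ≠ 0 → ∀ i, a ≤ z i) {y : Pt n}
    {j : Fin n} (hy : y j < a) : diffl f y = 0 := by
  refine Finset.sum_eq_zero fun s _ => ?_
  rw [dlim_eq_of_eventually_eq (c := 0), mul_zero]
  filter_upwards [self_mem_nhdsWithin] with ε (hε : 0 < ε)
  by_contra hne
  have := ha _ hne j
  rw [sub_smul_basisVec_apply] at this
  split_ifs at this <;> linarith

end Dlim

lemma eventually_le_iff_nhdsWithin_Ici (x y : Pt n) : ∀ᶠ z in 𝓝[≥] x, (y ≤ z ↔ y ≤ x) := by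
  by_cases hyx : y ≤ x
  · filter_upwards [self_mem_nhdsWithin] with z (hz : x ≤ z)
    exact iff_of_true (hyx.trans hz) hyx
  · obtain ⟨i, hi⟩ := not_forall.1 hyx
    have hopen : IsOpen {z : Pt n | z i < y i} := isOpen_lt (continuous_apply i) continuous_const
    filter_upwards [mem_nhdsWithin_of_mem_nhds (hopen.mem_nhds (not_le.1 hi))] with z hz
    exact iff_of_false (fun h => (h i).not_gt hz) hyx

section RightCont

variable {f g : Pt n → ℤ}

lemma RightCont.eventually_eq (hf : RightCont f) (x : Pt n) : ∀ᶠ y in 𝓝[≥] x, f y = f x := by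
  simpa [nhds_discrete, tendsto_pure] using hf x

lemma RightCont.sub (hf : RightCont f) (hg : RightCont g) : RightCont (f - g) :=
  fun x => (hf x).sub (hg x)

lemma RightCont.exists_eq_apply_csInf (hf : RightCont f) {c : Set (Pt n)}
    (hc : IsChain (· ≤ ·) c) (hne : c.Nonempty) (hbdd : BddBelow c) :
    ∃ z ∈ c, f z = f (sInf c) := by
  have : Nonempty c := hne.to_subtype
  have : IsCodirectedOrder c := ⟨fun a b => (hc.total a.2 b.2).elim
    (fun h => ⟨a, le_rfl, h⟩) fun h => ⟨b, h, le_rfl⟩⟩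
  have hlim : Tendsto ((↑) : c → Pt n) atBot (𝓝[≥] (sInf c)) :=
    tendsto_nhdsWithin_iff.2
      ⟨InfConvergenceClass.tendsto_coe_atBot_isGLB _ _ (isGLB_csInf hne hbdd),
        .of_forall fun z => csInf_le hbdd z.2⟩
  obtain ⟨z, hz⟩ := (hlim.eventually (hf.eventually_eq _)).exists
  exact ⟨z, z.2, hz⟩

lemma RightCont.exists_minimal_support (hf : RightCont f) {a : ℝ}
    (hbdd : ∀ z, f z ≠ 0 → ∀ i, a ≤ z i) {x : Pt n} (hx : f x ≠ 0) :
    ∃ q, f q ≠ 0 ∧ ∀ y < q, f y = 0 := by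
  have hchain : ∀ c ⊆ {z : (Pt n)ᵒᵈ | f (OrderDual.ofDual z) ≠ 0}, IsChain (· ≤ ·) c →
      ∀ y ∈ c, ∃ lb ∈ {z : (Pt n)ᵒᵈ | f (OrderDual.ofDual z) ≠ 0}, ∀ z ∈ c, z ≤ lb := by
    intro c hcS hc y hy
    have hbdd' : BddBelow (OrderDual.toDual ⁻¹' c) := ⟨fun _ => a, fun z hz => hbdd z (hcS hz)⟩
    obtain ⟨z, hz, hfz⟩ := hf.exists_eq_apply_csInf (c := OrderDual.toDual ⁻¹' c)
      hc.symm ⟨y, hy⟩ hbdd'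
    exact ⟨OrderDual.toDual (sInf _), show f (sInf _) ≠ 0 from hfz ▸ hcS hz,
      fun w hw => csInf_le hbdd' hw⟩
  obtain ⟨q, -, hq, hmin⟩ := zorn_le_nonempty₀ _ hchain (OrderDual.toDual x) hx
  exact ⟨OrderDual.ofDual q, hq, fun y hy => by_contra fun h => hy.not_ge (hmin h hy.le)⟩

end RightCont

section SumLe

variable {w : Pt n → ℤ}

lemma sumLe_eq_sum (hw : (Function.support w).Finite) (x : Pt n) :
    sumLe w x = ∑ y ∈ hw.toFinset, if y ≤ x then w y else 0 := by
  rw [sumLe, finsum_mem_eq_sum_filter _ _ hw, Finset.sum_filter]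
  rfl

lemma exists_le_of_sumLe_ne_zero {x : Pt n} (h : sumLe w x ≠ 0) : ∃ y ≤ x, w y ≠ 0 :=
  exists_ne_zero_of_finsum_mem_ne_zero h

lemma rightCont_sumLe (hw : (Function.support w).Finite) : RightCont (sumLe w) := by
  intro x
  refine tendsto_nhds_of_eventually_eq ?_
  filter_upwards [(eventually_all_finset hw.toFinset).2
    fun y _ => eventually_le_iff_nhdsWithin_Ici x y] with z hz
  simp only [sumLe_eq_sum hw]
  exact Finset.sum_congr rfl fun y hy => if_congr (hz y hy) rfl rfl

lemma dlim_sumLe (hw : (Function.support w).Finite) (x : Pt n) (s : Finset (Fin n)) :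
    dlim (sumLe w) x (basisVec n s) =
      ∑ y ∈ hw.toFinset, if y ≤ x ∧ ∀ i ∈ s, y i < x i then w y else 0 := by
  refine dlim_eq_of_eventually_eq ?_
  filter_upwards [(eventually_all_finset hw.toFinset).2
    fun y _ => eventually_le_sub_smul_basisVec_iff x y s] with ε hε
  rw [sumLe_eq_sum hw]
  exact Finset.sum_congr rfl fun y hy => if_congr (hε y hy) rfl rfl

lemma diffl_sumLe (hw : (Function.support w).Finite) (x : Pt n) : diffl (sumLe w) x = w x := by
  have hinclExcl : ∀ y : Pt n,
      ∑ s : Finset (Fin n), (-1 : ℤ) ^ s.card * (if y ≤ x ∧ ∀ i ∈ s, y i < x i then w y else 0)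
        = if y = x then w y else 0 := by
    intro y
    by_cases hyx : y ≤ x
    · simp only [hyx, true_and, mul_ite, mul_zero, ← ite_zero_mul]
      rw [← Finset.sum_mul, Finset.sum_ite_forall_mem_neg_one_pow_card, ite_zero_mul, one_mul]
      exact if_congr ⟨fun h => le_antisymm hyx fun i => not_lt.1 (h i), fun h i => h ▸ lt_irrefl _⟩
        rfl rfl
    · simp [hyx, show y ≠ x from fun h => hyx h.le]
  simp only [diffl, dlim_sumLe hw, Finset.mul_sum]
  rw [Finset.sum_comm]
  simp only [hinclExcl, Finset.sum_ite_eq', Set.Finite.mem_toFinset, Function.mem_support]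
  exact ite_eq_left_iff.2 fun h => (not_not.1 h).symm

end SumLe

/-- a nice function is recovered from its differential:
f(x) = Σ_{y ≤ x} Δf(y). -/
theorem stmt13 {n : ℕ} (f : Pt n → ℤ) (hf : NiceFn f) (x : Pt n) :
    f x = sumLe (diffl f) x := by
  obtain ⟨hrc, hfin, a, ha⟩ := hf
  by_contra hne
  set φ := f - sumLe (diffl f)
  have hφ_bdd : ∀ z, φ z ≠ 0 → ∀ i, a ≤ z i := by
    intro z hz i
    by_cases hfz : f z = 0
    · obtain ⟨y, hyz, hy⟩ := exists_le_of_sumLe_ne_zero (by simpa [φ, hfz] using hz)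
      exact (not_lt.1 fun h => hy (diffl_eq_zero_of_apply_lt ha h)).trans (hyz i)
    · exact ha z hfz i
  obtain ⟨q, hq, hmin⟩ :=
    (hrc.sub (rightCont_sumLe hfin)).exists_minimal_support hφ_bdd (sub_ne_zero.2 hne)
  have hdiff := diffl_sub_diffl_of_eq_of_lt fun y hy => sub_eq_zero.1 (hmin y hy)
  rw [diffl_sumLe hfin, sub_self] at hdiff
  exact hq hdiff.symm

end
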